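/- Let (A, d_A) and (B, d_B) be connected, finite-type CDGAs over a field k, and let C = A ∨ B be their wedge sum. Under the identification C^1 = A^1 ⊕ B^1, an element c = (a, b) lies in MC(C) if and only if a ∈ MC(A) and b ∈ MC(B), and for such c and every q ≥ 1: dim_k H^q(C, δ_c) = dim_k H^q(A, δ_a) + dim_k H^q(B, δ_b) + 1 if q = 1, a ≠ 0 and b ≠ 0, and dim_k H^q(C, δ_c) = dim_k H^q(A, δ_a) + dim_k H^q(B, δ_b) otherwise. -/

import Mathlib

open scoped TensorProduct DirectSum

/-- A commutative differential graded algebra (CDGA) over a field `k`: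
an ℕ-graded, associative, unital, graded-commutative `k`-algebra together with a
degree `+1` differential satisfying `d ∘ d = 0` and the graded Leibniz rule. -/
structure CDGA (k : Type) [Field k] : Type 1 where
  carrier : Type
  [ringCarrier : Ring carrier]
  [algebraCarrier : Algebra k carrier]
  grading : ℕ → Submodule k carrier
  [gradedAlgebra : GradedAlgebra grading]
  gcomm : ∀ ⦃i j : ℕ⦄ ⦃u v : carrier⦄, u ∈ grading i → v ∈ grading j →
    u * v = ((-1 : k) ^ (i * j)) • (v * u)
  d : carrier →ₗ[k] carrier
  d_mem : ∀ ⦃i : ℕ⦄ ⦃u : carrier⦄, u ∈ grading i → d u ∈ grading (i + 1)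
  d_sq : ∀ u : carrier, d (d u) = 0
  leibniz : ∀ ⦃i j : ℕ⦄ ⦃u v : carrier⦄, u ∈ grading i → v ∈ grading j →
    d (u * v) = d u * v + ((-1 : k) ^ i) • (u * d v)

attribute [instance] CDGA.ringCarrier CDGA.algebraCarrier CDGA.gradedAlgebra

namespace CDGA

variable {k : Type} [Field k]

/-- A CDGA is of finite type if each graded piece is finite-dimensional. -/
def FiniteType (A : CDGA k) : Prop := ∀ i : ℕ, FiniteDimensional k (A.grading i)

/-- A CDGA is connected if its degree-0 part is the span of the unit. -/
def Connected (A : CDGA k) : Prop :=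
  ∀ u ∈ A.grading 0, ∃ c : k, u = algebraMap k A.carrier c

/-- The Maurer–Cartan condition: `a·a + d a = 0` for `a ∈ A¹`. -/
def IsMC (A : CDGA k) (a : A.grading 1) : Prop :=
  (a : A.carrier) * (a : A.carrier) + A.d (a : A.carrier) = 0

/-- The differential `δ_a(u) = a·u + d u` of the Aomoto complex, in degree `q`. -/
noncomputable def delta (A : CDGA k) (a : A.grading 1) (q : ℕ) :
    A.grading q →ₗ[k] A.grading (q + 1) where
  toFun u := ⟨(a : A.carrier) * (u : A.carrier) + A.d (u : A.carrier), by
    have h1 : (a : A.carrier) * (u : A.carrier) ∈ A.grading (1 + q) :=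
      SetLike.mul_mem_graded a.2 u.2
    rw [add_comm] at h1
    exact Submodule.add_mem _ h1 (A.d_mem u.2)⟩
  map_add' u v := by
    ext
    simp only [Submodule.coe_add, mul_add, map_add]
    abel
  map_smul' c u := by
    ext
    simp only [SetLike.val_smul, RingHom.id_apply, Submodule.coe_smul, map_smul,
      mul_smul_comm, smul_add]

/-- Cocycles of the Aomoto complex in degree `q`. -/
noncomputable def cocycles (A : CDGA k) (a : A.grading 1) (q : ℕ) :
    Submodule k (A.grading q) :=
  LinearMap.ker (A.delta a q)

/-- Coboundaries of the Aomoto complex in degree `q`. -/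
noncomputable def coboundaries (A : CDGA k) (a : A.grading 1) : (q : ℕ) → Submodule k (A.grading q)
  | 0 => ⊥
  | (q + 1) => LinearMap.range (A.delta a q)

instance instAddCommGroupGrading (A : CDGA k) (q : ℕ) : AddCommGroup (A.grading q) :=
  Submodule.addCommGroup (A.grading q)

/-- Cohomology of the Aomoto complex `H^q(A, δ_a)`. -/
abbrev cohomology (A : CDGA k) (a : A.grading 1) (q : ℕ) :=
  A.cocycles a q ⧸ (A.coboundaries a q).comap (A.cocycles a q).subtype

/-- `dim_k H^q(A, δ_a)`. -/
noncomputable def hdim (A : CDGA k) (a : A.grading 1) (q : ℕ) : ℕ :=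
  Module.finrank k (A.cohomology a q)

/-- The resonance variety `R^q_s(A) = {a ∈ MC(A) : dim_k H^q(A, δ_a) ≥ s}`. -/
noncomputable def Res (A : CDGA k) (q s : ℕ) : Set (A.grading 1) :=
  {a | A.IsMC a ∧ s ≤ A.hdim a q}

/-- A morphism of CDGAs: a `k`-algebra map preserving degrees and differentials. -/
structure Hom (A B : CDGA k) where
  toAlgHom : A.carrier →ₐ[k] B.carrier
  map_mem : ∀ ⦃i : ℕ⦄ ⦃u : A.carrier⦄, u ∈ A.grading i → toAlgHom u ∈ B.grading i
  map_d : ∀ u : A.carrier, toAlgHom (A.d u) = B.d (toAlgHom u)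

/-- The restriction `φ^i : A^i → B^i` of a CDGA morphism. -/
def Hom.res {A B : CDGA k} (φ : Hom A B) (i : ℕ) : A.grading i →ₗ[k] B.grading i where
  toFun u := ⟨φ.toAlgHom u, φ.map_mem u.2⟩
  map_add' u v := by ext; simp
  map_smul' c u := by ext; simp

/-- Composition of CDGA morphisms. -/
def Hom.comp {A B C : CDGA k} (ψ : Hom B C) (φ : Hom A B) : Hom A C where
  toAlgHom := ψ.toAlgHom.comp φ.toAlgHom
  map_mem := fun _ _ hu => ψ.map_mem (φ.map_mem hu)
  map_d := fun u => by
    simp only [AlgHom.comp_apply]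
    rw [φ.map_d, ψ.map_d]

end CDGA

namespace CDGA0

/-- Equivalence between a product submodule and the product of submodules. -/
def prodSubEquiv {R M N : Type*} [Ring R] [AddCommGroup M] [AddCommGroup N]
    [Module R M] [Module R N] (p : Submodule R M) (q : Submodule R N) :
    (p.prod q) ≃ₗ[R] p × q where
  toFun x := (⟨x.1.1, x.2.1⟩, ⟨x.1.2, x.2.2⟩)
  invFun y := ⟨(y.1.1, y.2.1), ⟨y.1.2, y.2.2⟩⟩
  map_add' _ _ := rfl
  map_smul' _ _ := rfl
  left_inv _ := rfl
  right_inv _ := rfl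

lemma finrank_prodSub {R M N : Type*} [Field R] [AddCommGroup M] [AddCommGroup N]
    [Module R M] [Module R N] (p : Submodule R M) (q : Submodule R N)
    [FiniteDimensional R p] [FiniteDimensional R q] :
    Module.finrank R (p.prod q) = Module.finrank R p + Module.finrank R q := by
  rw [(prodSubEquiv p q).finrank_eq, Module.finrank_prod]

end CDGA0

namespace CDGA

variable {k : Type} [Field k]

@[simp] lemma res_coe {A B : CDGA k} (φ : Hom A B) (i : ℕ) (u : A.grading i) :
    ((φ.res i u : B.grading i) : B.carrier) = φ.toAlgHom u := rfl

@[simp] lemma delta_coe (A : CDGA k) (a : A.grading 1) (q : ℕ) (u : A.grading q) :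
    ((A.delta a q u : A.grading (q+1)) : A.carrier)
      = (a : A.carrier) * (u : A.carrier) + A.d (u : A.carrier) := rfl

lemma d_one (A : CDGA k) : A.d 1 = 0 := by
  have h1 : (1 : A.carrier) ∈ A.grading 0 := SetLike.GradedOne.one_mem
  have h := A.leibniz h1 h1
  simp only [one_mul, mul_one, pow_zero, one_smul] at h
  have : A.d 1 + 0 = A.d 1 + A.d 1 := by rw [add_zero]; exact h
  exact (add_left_cancel this).symm

lemma d_algebraMap (A : CDGA k) (s : k) : A.d (algebraMap k A.carrier s) = 0 := by
  rw [Algebra.algebraMap_eq_smul_one, map_smul, A.d_one, smul_zero]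

lemma delta_delta (A : CDGA k) {a : A.grading 1} (ha : A.IsMC a) (q : ℕ)
    (u : A.grading q) : A.delta a (q+1) (A.delta a q u) = 0 := by
  ext
  simp only [delta_coe, Submodule.coe_zero, ZeroMemClass.coe_zero]
  rw [map_add, A.d_sq, add_zero, A.leibniz a.2 u.2]
  have hIsMC : (a : A.carrier) * a + A.d a = 0 := ha
  have : (a : A.carrier) * ((a : A.carrier) * u + A.d u)
      + (A.d a * u + (-1 : k) ^ 1 • ((a : A.carrier) * A.d u))
      = ((a : A.carrier) * a + A.d a) * u := by
    rw [pow_one, neg_one_smul, mul_add, add_mul, mul_assoc]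
    abel
  rw [this, hIsMC, zero_mul]

lemma coboundaries_le (A : CDGA k) {a : A.grading 1} (ha : A.IsMC a) (q : ℕ) :
    A.coboundaries a q ≤ A.cocycles a q := by
  cases q with
  | zero => exact bot_le
  | succ n =>
    rintro x ⟨u, rfl⟩
    exact A.delta_delta ha n u

set_option synthInstance.maxHeartbeats 1000000 in
lemma hdim_add_finrank (A : CDGA k) {a : A.grading 1} (ha : A.IsMC a) (q : ℕ)
    [FiniteDimensional k (A.grading q)] :
    A.hdim a q + Module.finrank k (A.coboundaries a q)
      = Module.finrank k (A.cocycles a q) := by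
  have hle := A.coboundaries_le ha q
  have h2 : Module.finrank k ((A.coboundaries a q).comap (A.cocycles a q).subtype)
      = Module.finrank k (A.coboundaries a q) :=
    (Submodule.comapSubtypeEquivOfLe hle).finrank_eq
  rw [hdim, ← h2]
  exact Submodule.finrank_quotient_add_finrank _

lemma range_delta_zero (A : CDGA k) (hA : A.Connected) (a : A.grading 1) :
    LinearMap.range (A.delta a 0) = Submodule.span k {a} := by
  apply le_antisymm
  · rintro x ⟨u, rfl⟩
    obtain ⟨s, hs⟩ := hA u u.2
    apply Submodule.mem_span_singleton.2
    refine ⟨s, ?_⟩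
    ext
    simp only [delta_coe, SetLike.val_smul]
    rw [hs, d_algebraMap, add_zero, Algebra.algebraMap_eq_smul_one, mul_smul_comm, mul_one]
  · rw [Submodule.span_singleton_le_iff_mem]
    refine ⟨⟨1, SetLike.GradedOne.one_mem⟩, ?_⟩
    ext
    simp only [delta_coe, mul_one]
    rw [A.d_one, add_zero]

end CDGA

set_option maxHeartbeats 1000000 in
/-- Let `A`, `B` be connected, finite-type CDGAs over `k` and let
`C = A ∨ B` be their wedge sum (here: a connected CDGA `C` together with morphisms
`φ : A → C`, `ψ : B → C` which are injective in positive degrees, with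
`C^q = φ(A^q) ⊕ ψ(B^q)` for `q ≥ 1` and all products of positive-degree elements
coming from the two different factors equal to zero).  Under the identification
`C^1 = A^1 ⊕ B^1`, an element `c = (a, b)` lies in `MC(C)` iff `a ∈ MC(A)` and
`b ∈ MC(B)`, and for such `c` and every `q ≥ 1`:
`dim_k H^q(C, δ_c) = dim_k H^q(A, δ_a) + dim_k H^q(B, δ_b) + 1` if `q = 1`, `a ≠ 0`
and `b ≠ 0`, and `dim_k H^q(C, δ_c) = dim_k H^q(A, δ_a) + dim_k H^q(B, δ_b)`
otherwise. -/
theorem statement13 {k : Type} [Field k] (A B C : CDGA k)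
    (hAc : A.Connected) (hBc : B.Connected) (hAf : A.FiniteType) (hBf : B.FiniteType)
    (φ : CDGA.Hom A C) (ψ : CDGA.Hom B C) (hCc : C.Connected)
    (hinjA : ∀ q : ℕ, 1 ≤ q → Function.Injective (φ.res q))
    (hinjB : ∀ q : ℕ, 1 ≤ q → Function.Injective (ψ.res q))
    (hsup : ∀ q : ℕ, 1 ≤ q → C.grading q
        = (A.grading q).map φ.toAlgHom.toLinearMap
          ⊔ (B.grading q).map ψ.toAlgHom.toLinearMap)
    (hdisj : ∀ q : ℕ, 1 ≤ q →
        (A.grading q).map φ.toAlgHom.toLinearMap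
          ⊓ (B.grading q).map ψ.toAlgHom.toLinearMap = ⊥)
    (hmul : ∀ (i j : ℕ), 1 ≤ i → 1 ≤ j → ∀ u ∈ A.grading i, ∀ v ∈ B.grading j,
        φ.toAlgHom u * ψ.toAlgHom v = 0 ∧ ψ.toAlgHom v * φ.toAlgHom u = 0)
    (a : A.grading 1) (b : B.grading 1) :
    (C.IsMC (φ.res 1 a + ψ.res 1 b) ↔ A.IsMC a ∧ B.IsMC b) ∧
    (A.IsMC a → B.IsMC b → ∀ q : ℕ, 1 ≤ q →
      ((q = 1 → a ≠ 0 → b ≠ 0 →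
          C.hdim (φ.res 1 a + ψ.res 1 b) q = A.hdim a q + B.hdim b q + 1) ∧
       ((q ≠ 1 ∨ a = 0 ∨ b = 0) →
          C.hdim (φ.res 1 a + ψ.res 1 b) q = A.hdim a q + B.hdim b q))) := by
  classical
  set c : C.grading 1 := φ.res 1 a + ψ.res 1 b with hcdef
  let E : ∀ q : ℕ, (A.grading q × B.grading q) →ₗ[k] C.grading q :=
    fun q => (φ.res q).coprod (ψ.res q)
  have hEapp : ∀ q (u : A.grading q) (v : B.grading q),
      ((E q (u, v) : C.grading q) : C.carrier) = φ.toAlgHom u + ψ.toAlgHom v :=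
    fun q u v => rfl
  have hca : (c : C.carrier) = φ.toAlgHom a + ψ.toAlgHom b := rfl
  -- injectivity of E q for q ≥ 1
  have hEinj : ∀ q, 1 ≤ q → Function.Injective (E q) := by
    intro q hq
    rw [← LinearMap.ker_eq_bot, eq_bot_iff]
    rintro ⟨u, v⟩ huv
    have h0 : φ.toAlgHom u + ψ.toAlgHom v = 0 := by
      have := congrArg (fun x : C.grading q => (x : C.carrier)) (LinearMap.mem_ker.1 huv)
      simpa [hEapp] using this
    have hu : φ.toAlgHom u ∈ (A.grading q).map φ.toAlgHom.toLinearMap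
        ⊓ (B.grading q).map ψ.toAlgHom.toLinearMap := by
      refine ⟨⟨u, u.2, rfl⟩, ⟨-(v : B.carrier), neg_mem v.2, ?_⟩⟩
      simp only [AlgHom.toLinearMap_apply, map_neg]
      exact (eq_neg_of_add_eq_zero_left h0).symm
    rw [hdisj q hq] at hu
    have hu0 : (φ.toAlgHom (u : A.carrier)) = 0 := hu
    have hv0 : (ψ.toAlgHom (v : B.carrier)) = 0 := by
      have := h0; rw [hu0, zero_add] at this; exact this
    have hu1 : u = 0 := by
      apply hinjA q hq
      rw [map_zero]
      exact Subtype.ext hu0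
    have hv1 : v = 0 := by
      apply hinjB q hq
      rw [map_zero]
      exact Subtype.ext hv0
    simp [hu1, hv1, Submodule.mem_bot, Prod.ext_iff]
  -- surjectivity of E q for q ≥ 1
  have hEsurj : ∀ q, 1 ≤ q → Function.Surjective (E q) := by
    intro q hq x
    have hx : (x : C.carrier) ∈ (A.grading q).map φ.toAlgHom.toLinearMap
        ⊔ (B.grading q).map ψ.toAlgHom.toLinearMap := by
      rw [← hsup q hq]; exact x.2
    obtain ⟨y, hy, z, hz, hyz⟩ := Submodule.mem_sup.1 hx
    obtain ⟨u, hu, rfl⟩ := hy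
    obtain ⟨v, hv, rfl⟩ := hz
    exact ⟨(⟨u, hu⟩, ⟨v, hv⟩), Subtype.ext hyz⟩
  -- intertwining
  have hcomm : ∀ q, 1 ≤ q → ∀ (u : A.grading q) (v : B.grading q),
      C.delta c q (E q (u, v)) = E (q+1) (A.delta a q u, B.delta b q v) := by
    intro q hq u v
    apply Subtype.ext
    have h1 := (hmul 1 q le_rfl hq (a : A.carrier) a.2 (v : B.carrier) v.2).1
    have h2 := (hmul q 1 hq le_rfl (u : A.carrier) u.2 (b : B.carrier) b.2).2
    simp only [CDGA.delta_coe, hEapp, hca]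
    simp only [map_add, map_mul, φ.map_d, ψ.map_d, add_mul, mul_add, h1, h2, add_zero, zero_add]
    abel
  -- key MC computation
  have hkey : (c : C.carrier) * (c : C.carrier) + C.d (c : C.carrier)
      = φ.toAlgHom ((a : A.carrier) * a + A.d a)
        + ψ.toAlgHom ((b : B.carrier) * b + B.d b) := by
    have h1 := (hmul 1 1 le_rfl le_rfl (a : A.carrier) a.2 (b : B.carrier) b.2).1
    have h2 := (hmul 1 1 le_rfl le_rfl (a : A.carrier) a.2 (b : B.carrier) b.2).2
    rw [hca]
    simp only [map_add, map_mul, φ.map_d, ψ.map_d, add_mul, mul_add, h1, h2, add_zero, zero_add]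
    abel
  have hamem : (a : A.carrier) * a + A.d a ∈ A.grading 2 :=
    add_mem (SetLike.mul_mem_graded a.2 a.2) (A.d_mem a.2)
  have hbmem : (b : B.carrier) * b + B.d b ∈ B.grading 2 :=
    add_mem (SetLike.mul_mem_graded b.2 b.2) (B.d_mem b.2)
  have hiff : C.IsMC c ↔ A.IsMC a ∧ B.IsMC b := by
    constructor
    · intro hMC
      have h0 : φ.toAlgHom ((a : A.carrier) * a + A.d a)
          + ψ.toAlgHom ((b : B.carrier) * b + B.d b) = 0 := by
        rw [← hkey]; exact hMC
      have hmem : φ.toAlgHom ((a : A.carrier) * a + A.d a)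
          ∈ (A.grading 2).map φ.toAlgHom.toLinearMap
            ⊓ (B.grading 2).map ψ.toAlgHom.toLinearMap := by
        refine ⟨⟨_, hamem, rfl⟩, ⟨-((b : B.carrier) * b + B.d b), neg_mem hbmem, ?_⟩⟩
        simp only [AlgHom.toLinearMap_apply, map_neg]
        exact (eq_neg_of_add_eq_zero_left h0).symm
      rw [hdisj 2 (by norm_num)] at hmem
      have hA0 : φ.toAlgHom ((a : A.carrier) * a + A.d a) = 0 := hmem
      have hB0 : ψ.toAlgHom ((b : B.carrier) * b + B.d b) = 0 := by
        rw [hA0, zero_add] at h0; exact h0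
      constructor
      · have h5 : φ.res 2 ⟨_, hamem⟩ = φ.res 2 0 := by
          rw [map_zero]; exact Subtype.ext hA0
        exact congrArg Subtype.val (hinjA 2 (by norm_num) h5)
      · have h5 : ψ.res 2 ⟨_, hbmem⟩ = ψ.res 2 0 := by
          rw [map_zero]; exact Subtype.ext hB0
        exact congrArg Subtype.val (hinjB 2 (by norm_num) h5)
    · rintro ⟨hA, hB⟩
      show (c : C.carrier) * c + C.d c = 0
      rw [hkey, show (a : A.carrier) * a + A.d a = 0 from hA,
        show (b : B.carrier) * b + B.d b = 0 from hB, map_zero, map_zero, add_zero]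
  refine ⟨hiff, ?_⟩
  intro ha hb q hq
  have hCfin : ∀ i, 1 ≤ i → FiniteDimensional k (C.grading i) := by
    intro i hi
    haveI := hAf i; haveI := hBf i
    exact Module.Finite.of_surjective (E i) (hEsurj i hi)
  have hMCc : C.IsMC c := hiff.2 ⟨ha, hb⟩
  have hmapfin : ∀ (i : ℕ), 1 ≤ i → ∀ (S : Submodule k (A.grading i × B.grading i)),
      Module.finrank k (S.map (E i)) = Module.finrank k S := by
    intro i hi S
    exact (Submodule.equivMapOfInjective (E i) (hEinj i hi) S).finrank_eq.symm
  have hZ : ∀ i, 1 ≤ i → C.cocycles c i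
      = ((A.cocycles a i).prod (B.cocycles b i)).map (E i) := by
    intro i hi
    apply le_antisymm
    · intro x hx
      obtain ⟨⟨u, v⟩, rfl⟩ := hEsurj i hi x
      have hdx : C.delta c i (E i (u, v)) = 0 := LinearMap.mem_ker.1 hx
      rw [hcomm i hi] at hdx
      have h4 : (A.delta a i u, B.delta b i v) = (0 : _ × _) := by
        apply hEinj (i+1) (by omega)
        rw [hdx, map_zero]
      rw [Prod.ext_iff] at h4
      exact ⟨(u, v), ⟨LinearMap.mem_ker.2 h4.1, LinearMap.mem_ker.2 h4.2⟩, rfl⟩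
    · rintro x ⟨⟨u, v⟩, ⟨hu, hv⟩, rfl⟩
      apply LinearMap.mem_ker.2
      rw [hcomm i hi, LinearMap.mem_ker.1 hu, LinearMap.mem_ker.1 hv]
      exact map_zero _
  have hR : ∀ n, 1 ≤ n → LinearMap.range (C.delta c n)
      = ((LinearMap.range (A.delta a n)).prod
          (LinearMap.range (B.delta b n))).map (E (n+1)) := by
    intro n hn
    apply le_antisymm
    · rintro x ⟨y, rfl⟩
      obtain ⟨⟨u, v⟩, rfl⟩ := hEsurj n hn y
      refine ⟨(A.delta a n u, B.delta b n v), ⟨⟨u, rfl⟩, ⟨v, rfl⟩⟩, ?_⟩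
      exact (hcomm n hn u v).symm
    · rintro x ⟨⟨p, p'⟩, ⟨⟨u, hu⟩, ⟨v, hv⟩⟩, rfl⟩
      refine ⟨E n (u, v), ?_⟩
      rw [hcomm n hn, hu, hv]
  have hc1 : E 1 (a, b) = c := rfl
  have hspan1 : Submodule.span k {c}
      = (Submodule.span k {((a, b) : A.grading 1 × B.grading 1)}).map (E 1) := by
    rw [Submodule.map_span, Set.image_singleton, hc1]
  obtain ⟨n, rfl⟩ : ∃ n, q = n + 1 := ⟨q - 1, by omega⟩
  haveI := hAf (n+1); haveI := hBf (n+1)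
  haveI := hCfin (n+1) (by omega)
  have hCeq := C.hdim_add_finrank hMCc (n+1)
  have hAeq := A.hdim_add_finrank ha (n+1)
  have hBeq := B.hdim_add_finrank hb (n+1)
  have hZeq : Module.finrank k (C.cocycles c (n+1))
      = Module.finrank k (A.cocycles a (n+1)) + Module.finrank k (B.cocycles b (n+1)) := by
    rw [hZ (n+1) (by omega), hmapfin (n+1) (by omega), CDGA0.finrank_prodSub]
  cases n with
  | zero =>
    have hbC : Module.finrank k (C.coboundaries c (0+1))
        = Module.finrank k (Submodule.span k {((a, b) : A.grading 1 × B.grading 1)}) := by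
      show Module.finrank k (LinearMap.range (C.delta c 0)) = _
      rw [C.range_delta_zero hCc c, hspan1, hmapfin 1 le_rfl]
    have hbA : Module.finrank k (A.coboundaries a (0+1))
        = Module.finrank k (Submodule.span k {a}) := by
      show Module.finrank k (LinearMap.range (A.delta a 0)) = _
      rw [A.range_delta_zero hAc a]
    have hbB : Module.finrank k (B.coboundaries b (0+1))
        = Module.finrank k (Submodule.span k {b}) := by
      show Module.finrank k (LinearMap.range (B.delta b 0)) = _
      rw [B.range_delta_zero hBc b]
    constructor
    · intro _ hane hbne
      have h6 : Module.finrank k (Submodule.span k {((a, b) : A.grading 1 × B.grading 1)}) = 1 :=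
        finrank_span_singleton (by simp [Prod.ext_iff, hane])
      have h7 : Module.finrank k (Submodule.span k ({a} : Set (A.grading 1))) = 1 :=
        finrank_span_singleton hane
      have h8 : Module.finrank k (Submodule.span k ({b} : Set (B.grading 1))) = 1 :=
        finrank_span_singleton hbne
      omega
    · rintro (h1 | h1 | h1)
      · omega
      · subst h1
        have h6 : Module.finrank k (Submodule.span k ({0} : Set (A.grading 1))) = 0 := by
          rw [Submodule.span_zero_singleton]; exact finrank_bot k _
        by_cases hb0 : b = 0
        · subst hb0
          have h7 : Module.finrank k
              (Submodule.span k {((0, 0) : A.grading 1 × B.grading 1)}) = 0 := by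
            rw [show ((0, 0) : A.grading 1 × B.grading 1) = 0 from rfl,
              Submodule.span_zero_singleton]
            exact finrank_bot k _
          have h8 : Module.finrank k (Submodule.span k ({0} : Set (B.grading 1))) = 0 := by
            rw [Submodule.span_zero_singleton]; exact finrank_bot k _
          omega
        · have h7 : Module.finrank k
              (Submodule.span k {((0, b) : A.grading 1 × B.grading 1)}) = 1 :=
            finrank_span_singleton (by simp [Prod.ext_iff, hb0])
          have h8 : Module.finrank k (Submodule.span k ({b} : Set (B.grading 1))) = 1 :=
            finrank_span_singleton hb0
          omega
      · subst h1
        have h8 : Module.finrank k (Submodule.span k ({0} : Set (B.grading 1))) = 0 := by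
          rw [Submodule.span_zero_singleton]; exact finrank_bot k _
        by_cases ha0 : a = 0
        · subst ha0
          have h7 : Module.finrank k
              (Submodule.span k {((0, 0) : A.grading 1 × B.grading 1)}) = 0 := by
            rw [show ((0, 0) : A.grading 1 × B.grading 1) = 0 from rfl,
              Submodule.span_zero_singleton]
            exact finrank_bot k _
          have h6 : Module.finrank k (Submodule.span k ({0} : Set (A.grading 1))) = 0 := by
            rw [Submodule.span_zero_singleton]; exact finrank_bot k _
          omega
        · have h7 : Module.finrank k
              (Submodule.span k {((a, 0) : A.grading 1 × B.grading 1)}) = 1 :=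
            finrank_span_singleton (by simp [Prod.ext_iff, ha0])
          have h6 : Module.finrank k (Submodule.span k ({a} : Set (A.grading 1))) = 1 :=
            finrank_span_singleton ha0
          omega
  | succ m =>
    haveI := hAf (m+1); haveI := hBf (m+1)
    have hbCeq : Module.finrank k (C.coboundaries c (m+1+1))
        = Module.finrank k (A.coboundaries a (m+1+1))
          + Module.finrank k (B.coboundaries b (m+1+1)) := by
      show Module.finrank k (LinearMap.range (C.delta c (m+1))) = _
      rw [hR (m+1) (by omega), hmapfin (m+1+1) (by omega), CDGA0.finrank_prodSub]
      rfl
    constructor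
    · intro h1; omega
    · intro _; omega
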